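/- Let a₁,…,a₉ ∈ ℝ with a₅ ≠ 0, a₇ ≠ 0, and a₉ ≠ 0. Then there exist ṫ, ṙ, θ̇, φ̇, θ ∈ ℝ such that the three vectors in ℝ⁴: v₁ = (a₁ṫ + a₂ṙ, a₃ṫ + a₄ṙ, a₅θ̇, a₅φ̇), v₂ = (a₆θ̇, a₇θ̇, a₈ṫ + a₉ṙ, 0), v₃ = (a₆φ̇ sin²θ, a₇φ̇ sin²θ, 0, a₈ṫ + a₉ṙ) are linearly independent. -/
import Mathlib


/-- If `a₅ ≠ 0`, `a₇ ≠ 0`, `a₉ ≠ 0`, then one can choose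
`ṫ, ṙ, θ̇, φ̇, θ` so that the three vertical component vectors of the brackets
`[δ_t,δ_r]`, `[δ_t,δ_θ]`, `[δ_t,δ_φ]` are linearly independent in `ℝ⁴`. -/
theorem statement_10 (a1 a2 a3 a4 a5 a6 a7 a8 a9 : ℝ)
    (h5 : a5 ≠ 0) (h7 : a7 ≠ 0) (h9 : a9 ≠ 0) :
    ∃ td rd θd φd θ : ℝ,
      LinearIndependent ℝ
        ![(![a1 * td + a2 * rd, a3 * td + a4 * rd, a5 * θd, a5 * φd] : Fin 4 → ℝ),
          ![a6 * θd, a7 * θd, a8 * td + a9 * rd, 0],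
          ![a6 * φd * Real.sin θ ^ 2, a7 * φd * Real.sin θ ^ 2, 0, a8 * td + a9 * rd]] := by
  set rd : ℝ := if a4 * a9 = 2 * a5 * a7 then 2 else 1 with hrd_def
  have hrd0 : rd ≠ 0 := by
    rw [hrd_def]; split_ifs <;> norm_num
  have hkey : a4 * a9 * rd ^ 2 ≠ 2 * a5 * a7 := by
    rw [hrd_def]; split_ifs with h
    · intro hc
      rw [h] at hc
      have : a5 * a7 = 0 := by nlinarith
      exact (mul_ne_zero h5 h7) this
    · intro hc; apply h; nlinarith
  refine ⟨0, rd, 1, 1, Real.pi / 2, ?_⟩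
  rw [Real.sin_pi_div_two]
  rw [Fintype.linearIndependent_iff]
  intro g hg
  have h0 := congrFun hg 0
  have h1 := congrFun hg 1
  have h2 := congrFun hg 2
  have h3 := congrFun hg 3
  simp [Fin.sum_univ_three, Matrix.cons_val_zero, Matrix.cons_val_one,
    Matrix.head_cons, Matrix.vecHead, Matrix.vecTail] at h0 h1 h2 h3
  -- h2 : g0 * (a5) + g1 * (a9*rd) = 0 ; h3 : g0 * a5 + g2 * (a9*rd) = 0
  have hg0 : g 0 = 0 := by
    have hcomb : g 0 * (a4 * a9 * rd ^ 2 - 2 * a5 * a7) = 0 := by linear_combination (a9 * rd) * h1 - a7 * h2 - a7 * h3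
    rcases mul_eq_zero.mp hcomb with h | h
    · exact h
    · exact absurd (by linarith : a4 * a9 * rd ^ 2 = 2 * a5 * a7) hkey
  have hg1 : g 1 = 0 := by
    have h : g 1 * (a9 * rd) = 0 := by rw [hg0] at h2; linarith
    rcases mul_eq_zero.mp h with h | h
    · exact h
    · exact absurd h (mul_ne_zero h9 hrd0)
  have hg2 : g 2 = 0 := by
    have h : g 2 * (a9 * rd) = 0 := by rw [hg0] at h3; linarith
    rcases mul_eq_zero.mp h with h | h
    · exact h
    · exact absurd h (mul_ne_zero h9 hrd0)
  intro i
  fin_cases i <;> assumption
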